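/- Let λ > 0 and let (S₁, δu₁), …, (S_N, δu_N) be independent, identically distributed pairs of real-valued random variables such that almost surely S_i ≥ 0, S_i is integrable, δu_i is independent of S_i, E[δu_i] = 0, and E[(δu_i)²] < ∞. Set ω_i = exp(−S_i/λ), m = E[ω₁], Ê₂ = (1/N)·Σ_{i=1}^{N} ω_i·δu_i/m and E₂ = E[ω₁·δu₁]/m. Fix an error bound ε₂ > 0 and a risk probability ρ₂ ∈ (0,1). If N ≥ 4·Var[δu₁]·exp(2·E[S₁]/λ) / (ρ₂·ε₂²), then ℙ( |Ê₂ − E₂| ≥ ε₂ ) ≤ ρ₂. -/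

import Mathlib

open MeasureTheory ProbabilityTheory

/-- The variance `E[Z²] − (E[Z])²` of a real-valued random variable. -/
noncomputable def rvVar {Ω : Type*} [MeasurableSpace Ω] (μ : Measure Ω) (Z : Ω → ℝ) : ℝ :=
  (∫ x, (Z x) ^ 2 ∂μ) - (∫ x, Z x ∂μ) ^ 2

/-!
Each summand `ωᵢ δuᵢ` with `ωᵢ = exp (-Sᵢ/λ)` is centred, because `ωᵢ` is independent of the
centred `δuᵢ`; in particular `E₂ = 0`. Since `0 < ωᵢ ≤ 1`, its variance is at most
`E[δuᵢ²] = Var[δu₁]`. Chebyshev's inequality for the independent sum bounds the probability by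
`Var[δu₁] / (N m² ε₂²)`, and Jensen's inequality `m ≥ exp (-E[S₁]/λ)` turns this into
`Var[δu₁] exp (2 E[S₁]/λ) / (N ε₂²) ≤ ρ₂ / 4`.
-/

open Real

section

variable {Ω : Type*} [MeasurableSpace Ω] {μ : Measure Ω}

theorem abs_exp_neg_div_le_one {s lam : ℝ} (hs : 0 ≤ s) (hlam : 0 ≤ lam) :
    |exp (-s / lam)| ≤ 1 := by
  rw [abs_of_pos (exp_pos _), exp_le_one_iff]
  exact div_nonpos_of_nonpos_of_nonneg (neg_nonpos.2 hs) hlam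

theorem one_le_sq_mul_exp_of_exp_neg_le {a b m : ℝ} (h : exp (-a / b) ≤ m) :
    1 ≤ m ^ 2 * exp (2 * a / b) :=
  calc (1 : ℝ) = exp (-a / b) ^ 2 * exp (2 * a / b) := by
        rw [← exp_nat_mul, ← exp_add, ← exp_zero]; congr 1; push_cast; ring
    _ ≤ m ^ 2 * exp (2 * a / b) := by gcongr

theorem memLp_mul_of_abs_le_one {p : ENNReal} {X Y : Ω → ℝ} (hX : AEStronglyMeasurable X μ)
    (hX1 : ∀ᵐ x ∂μ, |X x| ≤ 1) (hY : MemLp Y p μ) : MemLp (fun x => X x * Y x) p μ :=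
  hY.of_le (hX.mul hY.1) <| hX1.mono fun x hx => by
    simpa only [norm_mul, Real.norm_eq_abs] using mul_le_of_le_one_left (abs_nonneg _) hx

theorem variance_mul_le_of_abs_le_one [IsProbabilityMeasure μ] {X Y : Ω → ℝ}
    (hX : AEStronglyMeasurable X μ) (hX1 : ∀ᵐ x ∂μ, |X x| ≤ 1) (hY : MemLp Y 2 μ) :
    variance (fun x => X x * Y x) μ ≤ ∫ x, Y x ^ 2 ∂μ := by
  refine (variance_le_expectation_sq (hX.mul hY.1)).trans ?_
  refine integral_mono_of_nonneg (.of_forall fun x => sq_nonneg _) hY.integrable_sq ?_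
  filter_upwards [hX1] with x hx
  simp only [Pi.mul_apply, Pi.pow_apply, mul_pow]
  exact mul_le_of_le_one_left (sq_nonneg _) ((sq_le_one_iff_abs_le_one _).2 hx)

theorem exp_integral_le_integral_exp [IsProbabilityMeasure μ] {f : Ω → ℝ} (hf : Integrable f μ)
    (hexp : Integrable (fun x => exp (f x)) μ) : exp (∫ x, f x ∂μ) ≤ ∫ x, exp (f x) ∂μ :=
  convexOn_exp.map_integral_le continuousOn_exp isClosed_univ (by simp) hf hexp

theorem toReal_meas_ge_abs_sum_le [IsProbabilityMeasure μ] {ι : Type*} [Fintype ι]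
    {Y : ι → Ω → ℝ} (hY : ∀ i, MemLp (Y i) 2 μ) (hind : iIndepFun Y μ)
    (hmean : ∀ i, μ[Y i] = 0) {v : ℝ} (hv : ∀ i, variance (Y i) μ ≤ v) {c : ℝ} (hc : 0 < c) :
    (μ {x | c ≤ |∑ i, Y i x|}).toReal ≤ Fintype.card ι * v / c ^ 2 := by
  have hsum : MemLp (∑ i, Y i) 2 μ := memLp_finsetSum' _ fun i _ => hY i
  have hsum_mean : ∫ x, ∑ i, Y i x ∂μ = 0 := by
    rw [integral_finsetSum _ fun i _ => (hY i).integrable one_le_two]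
    exact Finset.sum_eq_zero fun i _ => hmean i
  have hsum_var : variance (∑ i, Y i) μ ≤ Fintype.card ι * v := by
    rw [IndepFun.variance_sum (fun i _ => hY i) fun i _ j _ hij => hind.indepFun hij]
    simpa using Finset.sum_le_sum fun i (_ : i ∈ Finset.univ) => hv i
  calc (μ {x | c ≤ |∑ i, Y i x|}).toReal
      ≤ variance (∑ i, Y i) μ / c ^ 2 := by
        have := meas_ge_le_variance_div_sq hsum hc
        simp only [Finset.sum_apply, hsum_mean, sub_zero] at this
        exact ENNReal.toReal_le_of_le_ofReal (div_nonneg (variance_nonneg _ _) (sq_nonneg _)) this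
    _ ≤ Fintype.card ι * v / c ^ 2 := by gcongr

theorem toReal_meas_ge_abs_mean_div_le [IsProbabilityMeasure μ] {N : ℕ} {Y : Fin N → Ω → ℝ}
    (hY : ∀ i, MemLp (Y i) 2 μ) (hind : iIndepFun Y μ) (hmean : ∀ i, μ[Y i] = 0) {v : ℝ}
    (hv : ∀ i, variance (Y i) μ ≤ v) (hN : 0 < N) {m ε : ℝ} (hm : 0 < m) (hε : 0 < ε) :
    (μ {x | ε ≤ |1 / (N : ℝ) * ∑ i, Y i x / m|}).toReal ≤ v / (N * m ^ 2 * ε ^ 2) := by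
  have hNm : (0 : ℝ) < N * m := by positivity
  have hevent : {x | ε ≤ |1 / (N : ℝ) * ∑ i, Y i x / m|} = {x | N * m * ε ≤ |∑ i, Y i x|} := by
    ext x
    rw [Set.mem_ofPred_eq, Set.mem_ofPred_eq, ← Finset.sum_div,
      show ∀ s : ℝ, 1 / (N : ℝ) * (s / m) = s / (N * m) from fun s => by ring, abs_div,
      abs_of_pos hNm, le_div_iff₀ hNm, mul_comm]
  rw [hevent]
  refine (toReal_meas_ge_abs_sum_le hY hind hmean hv (by positivity)).trans_eq ?_
  rw [Fintype.card_fin]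
  field_simp

variable {S δu : Ω → ℝ} {lam : ℝ}

theorem integral_exp_neg_div_mul_eq_zero (hind : IndepFun S δu μ) (hS : Measurable S)
    (hδu : AEStronglyMeasurable δu μ) (hδu0 : ∫ x, δu x ∂μ = 0) :
    ∫ x, exp (-S x / lam) * δu x ∂μ = 0 := by
  have hω : IndepFun (fun x => exp (-S x / lam)) δu μ :=
    hind.comp (by fun_prop : Measurable fun s => exp (-s / lam)) measurable_id
  have := hω.integral_mul_eq_mul_integral (by fun_prop) hδu
  simpa [hδu0] using this

theorem exp_neg_integral_div_le_integral_exp_neg_div [IsProbabilityMeasure μ]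
    (hS : Measurable S) (hS0 : ∀ᵐ x ∂μ, 0 ≤ S x) (hSint : Integrable S μ) (hlam : 0 ≤ lam) :
    exp (-(∫ x, S x ∂μ) / lam) ≤ ∫ x, exp (-S x / lam) ∂μ := by
  have hω : Integrable (fun x => exp (-S x / lam)) μ :=
    .of_bound (by fun_prop) 1 (hS0.mono fun x hx => abs_exp_neg_div_le_one hx hlam)
  have hf : Integrable (fun x => -S x / lam) μ := hSint.neg.div_const lam
  simpa only [integral_div, integral_neg] using exp_integral_le_integral_exp hf hω

end

theorem sample_size_weighted_update_general {Ω : Type*} [MeasurableSpace Ω] (μ : Measure Ω)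
    [IsProbabilityMeasure μ] (lam : ℝ) (hlam : 0 < lam)
    (N : ℕ) (hN : 0 < N) (S δu : Fin N → Ω → ℝ)
    (hSm : ∀ i, Measurable (S i))
    (hiid_indep : iIndepFun (fun i x => (S i x, δu i x)) μ)
    (hiid_ident : ∀ i, IdentDistrib (fun x => (S i x, δu i x))
      (fun x => (S ⟨0, hN⟩ x, δu ⟨0, hN⟩ x)) μ μ)
    (hS0 : ∀ i, ∀ᵐ x ∂μ, 0 ≤ S i x) (hSint : ∀ i, Integrable (S i) μ)
    (hindep : ∀ i, IndepFun (S i) (δu i) μ)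
    (hδu0 : ∀ i, ∫ x, δu i x ∂μ = 0) (hδu2 : ∀ i, MemLp (δu i) 2 μ)
    (m : ℝ) (hm : m = ∫ x, Real.exp (-S ⟨0, hN⟩ x / lam) ∂μ)
    (E₂ : ℝ) (hE₂ : E₂ = (∫ x, Real.exp (-S ⟨0, hN⟩ x / lam) * δu ⟨0, hN⟩ x ∂μ) / m)
    (ε₂ ρ₂ : ℝ) (hε₂ : 0 < ε₂) (hρ₂ : ρ₂ ∈ Set.Ioo (0 : ℝ) 1)
    (hsize : (N : ℝ) ≥ 4 * rvVar μ (δu ⟨0, hN⟩) *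
      Real.exp (2 * (∫ x, S ⟨0, hN⟩ x ∂μ) / lam) / (ρ₂ * ε₂ ^ 2)) :
    (μ {x | ε₂ ≤ |(1 / (N : ℝ)) * ∑ i, Real.exp (-S i x / lam) * δu i x / m - E₂|}).toReal ≤
      ρ₂ := by
  set i₀ : Fin N := ⟨0, hN⟩
  set Y : Fin N → Ω → ℝ := fun i x => exp (-S i x / lam) * δu i x
  have hω_le : ∀ i, ∀ᵐ x ∂μ, |exp (-S i x / lam)| ≤ 1 := fun i =>
    (hS0 i).mono fun x hx => abs_exp_neg_div_le_one hx hlam.le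
  have hY_mean : ∀ i, μ[Y i] = 0 := fun i =>
    integral_exp_neg_div_mul_eq_zero (hindep i) (hSm i) (hδu2 i).aestronglyMeasurable (hδu0 i)
  have hg : Measurable fun p : ℝ × ℝ => exp (-p.1 / lam) * p.2 := by fun_prop
  have hY_var : ∀ i, variance (Y i) μ ≤ rvVar μ (δu i₀) := fun i => by
    have hid : IdentDistrib (Y i) (Y i₀) μ μ := (hiid_ident i).comp hg
    rw [hid.variance_eq, rvVar, hδu0, sq, mul_zero, sub_zero]
    exact variance_mul_le_of_abs_le_one (by fun_prop) (hω_le i₀) (hδu2 i₀)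
  have hm_ge : exp (-(∫ x, S i₀ x ∂μ) / lam) ≤ m :=
    hm ▸ exp_neg_integral_div_le_integral_exp_neg_div (hSm i₀) (hS0 i₀) (hSint i₀) hlam.le
  have hm_pos : 0 < m := (exp_pos _).trans_le hm_ge
  rw [hE₂, hY_mean i₀, zero_div]
  simp only [sub_zero]
  refine (toReal_meas_ge_abs_mean_div_le
    (fun i => memLp_mul_of_abs_le_one (by fun_prop) (hω_le i) (hδu2 i))
    (hiid_indep.comp _ fun _ => hg) hY_mean hY_var hN hm_pos hε₂).trans ?_
  have hV : 0 ≤ rvVar μ (δu i₀) := (variance_nonneg _ _).trans (hY_var i₀)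
  rw [ge_iff_le, div_le_iff₀ (by have := hρ₂.1; positivity)] at hsize
  rw [div_le_iff₀ (by positivity)]
  nlinarith [mul_le_mul_of_nonneg_left (one_le_sq_mul_exp_of_exp_neg_le hm_ge) hV, hρ₂.1]

/-- Sample-size form of the Chebyshev bound for the importance-weighted MPPI control
update: if `N ≥ 4·Var[δu₁]·exp(2·E[S₁]/λ)/(ρ₂·ε₂²)`, then
`ℙ(|Ê₂ − E₂| ≥ ε₂) ≤ ρ₂`. -/
theorem sample_size_weighted_update {Ω : Type*} [MeasurableSpace Ω] (μ : Measure Ω)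
    [IsProbabilityMeasure μ] (lam : ℝ) (hlam : 0 < lam)
    (N : ℕ) (hN : 0 < N) (S δu : Fin N → Ω → ℝ)
    (hSm : ∀ i, Measurable (S i)) (hδum : ∀ i, Measurable (δu i))
    (hiid_indep : iIndepFun (fun i x => (S i x, δu i x)) μ)
    (hiid_ident : ∀ i, IdentDistrib (fun x => (S i x, δu i x))
      (fun x => (S ⟨0, hN⟩ x, δu ⟨0, hN⟩ x)) μ μ)
    (hS0 : ∀ i, ∀ᵐ x ∂μ, 0 ≤ S i x) (hSint : ∀ i, Integrable (S i) μ)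
    (hindep : ∀ i, IndepFun (S i) (δu i) μ)
    (hδu0 : ∀ i, ∫ x, δu i x ∂μ = 0) (hδu2 : ∀ i, MemLp (δu i) 2 μ)
    (m : ℝ) (hm : m = ∫ x, Real.exp (-S ⟨0, hN⟩ x / lam) ∂μ)
    (E₂ : ℝ) (hE₂ : E₂ = (∫ x, Real.exp (-S ⟨0, hN⟩ x / lam) * δu ⟨0, hN⟩ x ∂μ) / m)
    (ε₂ ρ₂ : ℝ) (hε₂ : 0 < ε₂) (hρ₂ : ρ₂ ∈ Set.Ioo (0 : ℝ) 1)
    (hsize : (N : ℝ) ≥ 4 * rvVar μ (δu ⟨0, hN⟩) *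
      Real.exp (2 * (∫ x, S ⟨0, hN⟩ x ∂μ) / lam) / (ρ₂ * ε₂ ^ 2)) :
    (μ {x | ε₂ ≤ |(1 / (N : ℝ)) * ∑ i, Real.exp (-S i x / lam) * δu i x / m - E₂|}).toReal ≤
      ρ₂ :=
  sample_size_weighted_update_general μ lam hlam N hN S δu hSm hiid_indep hiid_ident hS0 hSint
    hindep hδu0 hδu2 m hm E₂ hE₂ ε₂ ρ₂ hε₂ hρ₂ hsize
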